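/- The poset E_n is (n+1)-colourable: there exist n+1 upsets of E_n such that distinct points of E_n have distinct ∼-ω-types over these upsets. -/
import Mathlib


/-- The carrier of the Esakia-type poset `E_n`: points `x^l_i` with
`l ≤ 2^n`, `i < ω`, together with a bottom point `x_∞` (encoded as `none`). -/
def EnC (n : ℕ) : Type := Option {p : ℕ × ℕ // p.1 ≤ 2 ^ n}

/-- The point `x^l_i` of `E_n`. -/
def EnPt (n : ℕ) (l i : ℕ) (h : l ≤ 2 ^ n) : EnC n := some ⟨(l, i), h⟩

/-- The bottom point `x_∞` of `E_n`. -/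
def EnInf (n : ℕ) : EnC n := none

/-- The order of `E_n`: `x_∞` is below everything; `x^l_{i+1} ≤ x^{l'}_i`
iff `l' ≠ l + 1`; every element of level `i + t` (`t ≥ 2`) is below every
element of level `i`. -/
def EnLe {n : ℕ} : EnC n → EnC n → Prop
  | none, _ => True
  | some _, none => False
  | some p, some q =>
      p.1 = q.1 ∨ (p.1.2 = q.1.2 + 1 ∧ q.1.1 ≠ p.1.1 + 1) ∨ q.1.2 + 2 ≤ p.1.2

instance (n : ℕ) : PartialOrder (EnC n) where
  le := EnLe
  le_refl a := by cases a with
    | none => trivial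
    | some p => exact Or.inl rfl
  le_trans a b c hab hbc := by
    cases a with
    | none => trivial
    | some p =>
      cases b with
      | none => simp only [EnLe] at hab
      | some q =>
        cases c with
        | none => simp only [EnLe] at hbc
        | some r =>
          simp only [EnLe] at *
          rcases hab with h1 | h1 | h1 <;> rcases hbc with h2 | h2 | h2
          · exact Or.inl (h1.trans h2)
          · rw [h1]; exact Or.inr (Or.inl h2)
          · rw [h1]; exact Or.inr (Or.inr h2)
          · rw [← h2]; exact Or.inr (Or.inl h1)
          · exact Or.inr (Or.inr (by omega))
          · exact Or.inr (Or.inr (by omega))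
          · rw [← h2]; exact Or.inr (Or.inr h1)
          · exact Or.inr (Or.inr (by omega))
          · exact Or.inr (Or.inr (by omega))
  le_antisymm a b hab hba := by
    cases a with
    | none => cases b with
      | none => rfl
      | some q => simp only [EnLe] at hba
    | some p =>
      cases b with
      | none => simp only [EnLe] at hab
      | some q =>
        simp only [EnLe] at hab hba
        congr 1
        exact Subtype.ext (by rcases hab with h | h | h <;> rcases hba with h' | h' | h' <;>
          first | exact h | exact h'.symm | omega)

/-- The `j`-th level of `E_n`. -/
def EnLevel (n j : ℕ) : Set (EnC n) := {p | ∃ (l : ℕ) (h : l ≤ 2 ^ n), p = EnPt n l j h}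

/-- The bisimulation-style relations `∼^G_m` over a family `G` of subsets. -/
def simRel {α : Type*} [Preorder α] (G : Set (Set α)) : ℕ → α → α → Prop
  | 0 => fun x y => ∀ g ∈ G, (x ∈ g ↔ y ∈ g)
  | m + 1 => fun x y =>
      (∀ z, x ≤ z → ∃ w, y ≤ w ∧ simRel G m z w) ∧
      (∀ w, y ≤ w → ∃ z, x ≤ z ∧ simRel G m z w)

/-- `x ∼^G_ω y`. -/
def simOmega {α : Type*} [Preorder α] (G : Set (Set α)) (x y : α) : Prop :=
  ∀ m, simRel G m x y


section EnProofAux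

variable {n : ℕ}

/-! ### Basic order lemmas -/

lemma EnC.not_some_le_none {p : {p : ℕ × ℕ // p.1 ≤ 2 ^ n}} :
    ¬ (@LE.le (EnC n) _ (some p) none) := fun h => h

lemma EnC.none_le (x : EnC n) : @LE.le (EnC n) _ none x := trivial

lemma pt_le_pt' {l i l' j : ℕ} {hl : l ≤ 2 ^ n} {hl' : l' ≤ 2 ^ n} :
    EnPt n l i hl ≤ EnPt n l' j hl' ↔
      (((l, i) : ℕ × ℕ) = (l', j) ∨ (i = j + 1 ∧ l' ≠ l + 1) ∨ j + 2 ≤ i) := Iff.rfl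

lemma pt_le_pt {l i l' j : ℕ} {hl : l ≤ 2 ^ n} {hl' : l' ≤ 2 ^ n} :
    EnPt n l i hl ≤ EnPt n l' j hl' ↔
      ((l = l' ∧ i = j) ∨ (i = j + 1 ∧ l' ≠ l + 1) ∨ j + 2 ≤ i) := by
  rw [pt_le_pt']
  simp [Prod.ext_iff]

lemma le_pt_elim {l i : ℕ} {hl : l ≤ 2 ^ n} {z : EnC n} (hz : EnPt n l i hl ≤ z) :
    ∃ (l₂ j : ℕ) (h₂ : l₂ ≤ 2 ^ n), z = EnPt n l₂ j h₂ ∧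
      ((l₂ = l ∧ j = i) ∨ (i = j + 1 ∧ l₂ ≠ l + 1) ∨ j + 2 ≤ i) := by
  cases z with
  | none => exact absurd hz EnC.not_some_le_none
  | some q =>
    refine ⟨q.1.1, q.1.2, q.2, rfl, ?_⟩
    have h : EnPt n l i hl ≤ EnPt n q.1.1 q.1.2 q.2 := hz
    rcases pt_le_pt.mp h with h | h | h
    · exact Or.inl ⟨h.1.symm, h.2.symm⟩
    · exact Or.inr (Or.inl h)
    · exact Or.inr (Or.inr h)

/-! ### The colouring -/

def col (n : ℕ) (k : Fin (n + 1)) : Set (EnC n) :=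
  {x | ∃ (l : ℕ) (hl : l ≤ 2 ^ n), x = EnPt n l 0 hl ∧ Nat.testBit l k.val = false}

lemma col_isUpperSet (k : Fin (n + 1)) : IsUpperSet (col n k) := by
  intro x y hxy hx
  obtain ⟨l, hl, rfl, hb⟩ := hx
  obtain ⟨l₂, j, h₂, rfl, hc⟩ := le_pt_elim hxy
  rcases hc with ⟨rfl, rfl⟩ | ⟨h, _⟩ | h
  · exact ⟨l₂, h₂, rfl, hb⟩
  · omega
  · omega

lemma pt_mem_col {k : Fin (n + 1)} {l i : ℕ} {hl : l ≤ 2 ^ n} :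
    EnPt n l i hl ∈ col n k ↔ (i = 0 ∧ Nat.testBit l k.val = false) := by
  constructor
  · rintro ⟨l₀, h₀, heq, hb⟩
    have h3 : ((l, i) : ℕ × ℕ) = (l₀, 0) := congrArg Subtype.val (Option.some.inj heq)
    have h : l = l₀ ∧ i = 0 := ⟨congrArg Prod.fst h3, congrArg Prod.snd h3⟩
    exact ⟨h.2, h.1 ▸ hb⟩
  · rintro ⟨rfl, hb⟩
    exact ⟨l, hl, rfl, hb⟩

lemma none_not_mem_col {k : Fin (n + 1)} : (none : EnC n) ∉ col n k := by
  rintro ⟨l₀, h₀, heq, -⟩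
  simp [EnPt] at heq

/-! ### Generic lemmas about `simRel` -/

lemma simRel_symm {α : Type*} [Preorder α] {G : Set (Set α)} :
    ∀ (m : ℕ) {x y : α}, simRel G m x y → simRel G m y x
  | 0, _, _, h => fun g hg => (h g hg).symm
  | m + 1, _, _, h =>
      ⟨fun z hz => let ⟨w, hw, hs⟩ := h.2 z hz; ⟨w, hw, simRel_symm m hs⟩,
       fun w hw => let ⟨z, hz2, hs⟩ := h.1 w hw; ⟨z, hz2, simRel_symm m hs⟩⟩

lemma simRel_succ_imp {α : Type*} [Preorder α] {G : Set (Set α)}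
    (hG : ∀ g ∈ G, IsUpperSet g) :
    ∀ (m : ℕ) {x y : α}, simRel G (m + 1) x y → simRel G m x y := by
  intro m
  induction m with
  | zero =>
    intro x y h g hg
    obtain ⟨w, hyw, hxw⟩ := h.1 x le_rfl
    obtain ⟨z, hxz, hzy⟩ := h.2 y le_rfl
    constructor
    · intro hx
      exact (hzy g hg).mp (hG g hg hxz hx)
    · intro hy
      exact (hxw g hg).mpr (hG g hg hyw hy)
  | succ m ih =>
    intro x y h
    exact ⟨fun z hz => let ⟨w, hw, hs⟩ := h.1 z hz; ⟨w, hw, ih hs⟩,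
           fun w hw => let ⟨z, hz2, hs⟩ := h.2 w hw; ⟨z, hz2, ih hs⟩⟩

lemma simRel_add_imp {α : Type*} [Preorder α] {G : Set (Set α)}
    (hG : ∀ g ∈ G, IsUpperSet g) :
    ∀ (d m : ℕ) {x y : α}, simRel G (m + d) x y → simRel G m x y
  | 0, _, _, _, h => h
  | d + 1, m, _, _, h => simRel_add_imp hG d m (simRel_succ_imp hG (m + d) h)

lemma simRel_le_imp {α : Type*} [Preorder α] {G : Set (Set α)}
    (hG : ∀ g ∈ G, IsUpperSet g) {m m' : ℕ} (hmm : m' ≤ m) {x y : α}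
    (h : simRel G m x y) : simRel G m' x y := by
  obtain ⟨d, rfl⟩ := Nat.exists_eq_add_of_le hmm
  exact simRel_add_imp hG d m' h

/-! ### Bit lemmas -/

lemma bits_exists_ne {l l' : ℕ} (hl : l ≤ 2 ^ n) (hl' : l' ≤ 2 ^ n) (hne : l ≠ l') :
    ∃ k : Fin (n + 1), Nat.testBit l k.val ≠ Nat.testBit l' k.val := by
  by_contra hcon
  push_neg at hcon
  apply hne
  apply Nat.eq_of_testBit_eq
  intro k
  by_cases hk : k < n + 1
  · exact hcon ⟨k, hk⟩
  · have h2 : 2 ^ (n + 1) ≤ 2 ^ k := Nat.pow_le_pow_right (by norm_num) (by omega)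
    have hlk : l < 2 ^ k := by
      have := Nat.pow_lt_pow_right (a := 2) (by norm_num) (Nat.lt_succ_self n)
      omega
    have hlk' : l' < 2 ^ k := by
      have := Nat.pow_lt_pow_right (a := 2) (by norm_num) (Nat.lt_succ_self n)
      omega
    rw [Nat.testBit_lt_two_pow hlk, Nat.testBit_lt_two_pow hlk']

/-! ### The main separation induction -/

/-- `y` is deeper than level `i` (or is `x_∞`). -/
def Deeper (i : ℕ) (y : EnC n) : Prop :=
  ∀ q : {p : ℕ × ℕ // p.1 ≤ 2 ^ n}, y = some q → i < q.1.2

lemma mainAB (n : ℕ) : ∀ i : ℕ,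
    (∀ (l l' : ℕ) (hl : l ≤ 2 ^ n) (hl' : l' ≤ 2 ^ n), l ≠ l' →
      ¬ simRel (Set.range (col n)) (2 * i) (EnPt n l i hl) (EnPt n l' i hl')) ∧
    (∀ (l : ℕ) (hl : l ≤ 2 ^ n) (y : EnC n), Deeper i y →
      ¬ simRel (Set.range (col n)) (2 * i + 1) (EnPt n l i hl) y) := by
  have hG : ∀ g ∈ Set.range (col n), IsUpperSet g := by
    rintro g ⟨k, rfl⟩
    exact col_isUpperSet k
  intro i
  induction i using Nat.strong_induction_on with
  | _ i IH =>
  cases i with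
  | zero =>
    constructor
    · -- A₀ : distinct colours at level 0
      intro l l' hl hl' hne hsim
      obtain ⟨k, hk⟩ := bits_exists_ne hl hl' hne
      have h0 : simRel (Set.range (col n)) 0 (EnPt n l 0 hl) (EnPt n l' 0 hl') := hsim
      have hmem := h0 (col n k) ⟨k, rfl⟩
      rw [pt_mem_col, pt_mem_col] at hmem
      simp only [true_and] at hmem
      revert hk hmem
      cases Nat.testBit l k.val <;> cases Nat.testBit l' k.val <;> simp
    · -- B₀
      intro l hl y hy hsim
      by_cases hb : ∃ k : Fin (n + 1), Nat.testBit l k.val = false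
      · obtain ⟨k, hk⟩ := hb
        have h0 : simRel (Set.range (col n)) 0 (EnPt n l 0 hl) y :=
          simRel_succ_imp hG 0 hsim
        have hmem := h0 (col n k) ⟨k, rfl⟩
        have hx : EnPt n l 0 hl ∈ col n k := pt_mem_col.mpr ⟨rfl, hk⟩
        have hyin := hmem.mp hx
        obtain ⟨l₀, h₀, heq, -⟩ := hyin
        have hlt0 : (0 : ℕ) < 0 := hy ⟨(l₀, 0), h₀⟩ heq
        omega
      · push_neg at hb
        -- all bits of l are true; use w = x⁰₀
        have hw0 : (0 : ℕ) ≤ 2 ^ n := Nat.zero_le _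
        have hyw : y ≤ EnPt n 0 0 hw0 := by
          cases y with
          | none => exact trivial
          | some q =>
            have hq : 0 < q.1.2 := hy q rfl
            have : EnPt n q.1.1 q.1.2 q.2 ≤ EnPt n 0 0 hw0 := by
              rw [pt_le_pt]
              rcases Nat.lt_or_ge q.1.2 2 with h2 | h2
              · exact Or.inr (Or.inl ⟨by omega, by omega⟩)
              · exact Or.inr (Or.inr h2)
            exact this
        have hs1 : simRel (Set.range (col n)) (0 + 1) (EnPt n l 0 hl) y := hsim
        obtain ⟨z, hxz, hzw⟩ := hs1.2 _ hyw
        obtain ⟨l₂, j, h₂, rfl, hc⟩ := le_pt_elim hxz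
        have hz : l₂ = l ∧ j = 0 := by
          rcases hc with h | h | h
          · exact h
          · omega
          · omega
        obtain ⟨rfl, rfl⟩ := hz
        have hmem := hzw (col n ⟨0, Nat.succ_pos n⟩) ⟨⟨0, Nat.succ_pos n⟩, rfl⟩
        rw [pt_mem_col, pt_mem_col] at hmem
        have h1 : Nat.testBit l₂ 0 = true := by simpa using hb ⟨0, Nat.succ_pos n⟩
        have h2 : Nat.testBit 0 0 = false := Nat.zero_testBit 0
        simp only [true_and] at hmem
        rw [h1, h2] at hmem
        simp at hmem
  | succ i' =>
    -- the key `A` statement, proved assuming `l < 2^n`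
    have hA : ∀ (l l' : ℕ) (hl : l ≤ 2 ^ n) (hl' : l' ≤ 2 ^ n), l ≠ l' →
        ¬ simRel (Set.range (col n)) (2 * (i' + 1))
          (EnPt n l (i' + 1) hl) (EnPt n l' (i' + 1) hl') := by
      have key : ∀ (l l' : ℕ) (hlt : l < 2 ^ n) (hl' : l' ≤ 2 ^ n), l ≠ l' →
          ¬ simRel (Set.range (col n)) (2 * (i' + 1))
            (EnPt n l (i' + 1) (le_of_lt hlt)) (EnPt n l' (i' + 1) hl') := by
        intro l l' hlt hl' hne hsim
        have hwle : l + 1 ≤ 2 ^ n := hlt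
        -- witness w = x^{l+1}_{i'}
        have hyw : EnPt n l' (i' + 1) hl' ≤ EnPt n (l + 1) i' hwle := by
          rw [pt_le_pt]
          exact Or.inr (Or.inl ⟨rfl, by omega⟩)
        have hs : simRel (Set.range (col n)) (2 * i' + 1 + 1)
            (EnPt n l (i' + 1) (le_of_lt hlt)) (EnPt n l' (i' + 1) hl') := hsim
        obtain ⟨z, hxz, hzw⟩ := hs.2 _ hyw
        obtain ⟨l₂, j, h₂, rfl, hc⟩ := le_pt_elim hxz
        rcases hc with ⟨rfl, rfl⟩ | ⟨hj, hl2⟩ | hj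
        · -- z = x, level i'+1 vs level i' : use B_{i'} + symmetry
          have hB := (IH i' (Nat.lt_succ_self i')).2 (l₂ + 1) hwle
            (EnPt n l₂ (i' + 1) h₂) (by
              intro q hq
              have : q = ⟨(l₂, i' + 1), h₂⟩ := (Option.some.inj hq).symm
              rw [this]; exact Nat.lt_succ_self i')
          exact hB (simRel_symm _ hzw)
        · -- z at level i', z ≠ w : use A_{i'}
          have hj' : j = i' := by omega
          subst hj'
          have hA' := (IH j (Nat.lt_succ_self j)).1 l₂ (l + 1) h₂ hwle hl2
          exact hA' (simRel_le_imp hG (by omega) hzw)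
        · -- z at level ≤ i'-1 : use B_j
          have hjlt : j < i' := by omega
          have hB := (IH j (by omega)).2 l₂ h₂ (EnPt n (l + 1) i' hwle) (by
            intro q hq
            have : q = ⟨(l + 1, i'), hwle⟩ := (Option.some.inj hq).symm
            rw [this]; exact hjlt)
          exact hB (simRel_le_imp hG (by omega) hzw)
      intro l l' hl hl' hne hsim
      rcases Nat.lt_or_ge l (2 ^ n) with hlt | hge
      · exact key l l' hlt hl' hne hsim
      · have hle : l = 2 ^ n := le_antisymm hl hge
        have hlt' : l' < 2 ^ n := by omega
        exact key l' l hlt' hl (Ne.symm hne) (simRel_symm _ hsim)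
    refine ⟨fun l l' hl hl' hne => hA l l' hl hl' hne, ?_⟩
    -- B_{i'+1}
    intro l hl y hy hsim
    by_cases hlt : l < 2 ^ n
    · -- w = x^{l+1}_{i'}
      have hwle : l + 1 ≤ 2 ^ n := hlt
      have hyw : y ≤ EnPt n (l + 1) i' hwle := by
        cases y with
        | none => exact trivial
        | some q =>
          have hq : i' + 1 < q.1.2 := hy q rfl
          have : EnPt n q.1.1 q.1.2 q.2 ≤ EnPt n (l + 1) i' hwle := by
            rw [pt_le_pt]
            exact Or.inr (Or.inr (by omega))
          exact this
      have hs : simRel (Set.range (col n)) (2 * (i' + 1) + 1)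
          (EnPt n l (i' + 1) hl) y := hsim
      obtain ⟨z, hxz, hzw⟩ := hs.2 _ hyw
      -- hzw : simRel _ (2*(i'+1)) z w
      obtain ⟨l₂, j, h₂, rfl, hc⟩ := le_pt_elim hxz
      rcases hc with ⟨rfl, rfl⟩ | ⟨hj, hl2⟩ | hj
      · -- z = x : B_{i'} applied to (w, x) + symmetry
        have hB := (IH i' (Nat.lt_succ_self i')).2 (l₂ + 1) hwle
          (EnPt n l₂ (i' + 1) h₂) (by
            intro q hq
            have : q = ⟨(l₂, i' + 1), h₂⟩ := (Option.some.inj hq).symm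
            rw [this]; exact Nat.lt_succ_self i')
        exact hB (simRel_symm _
          (simRel_le_imp hG (show 2 * i' + 1 ≤ 2 * (i' + 1) by omega) hzw))
      · -- z at level i', ≠ w : A_{i'}
        have hj' : j = i' := by omega
        subst hj'
        have hA' := (IH j (Nat.lt_succ_self j)).1 l₂ (l + 1) h₂ hwle hl2
        exact hA' (simRel_le_imp hG (by omega) hzw)
      · -- z deeper-up (level < i') : B_j
        have hjlt : j < i' := by omega
        have hB := (IH j (by omega)).2 l₂ h₂ (EnPt n (l + 1) i' hwle) (by
          intro q hq
          have : q = ⟨(l + 1, i'), hwle⟩ := (Option.some.inj hq).symm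
          rw [this]; exact hjlt)
        exact hB (simRel_le_imp hG (by omega) hzw)
    · -- l = 2^n : w = x^0_{i'+1}
      have hw0 : (0 : ℕ) ≤ 2 ^ n := Nat.zero_le _
      have hle : l = 2 ^ n := le_antisymm hl (not_lt.mp hlt)
      have hyw : y ≤ EnPt n 0 (i' + 1) hw0 := by
        cases y with
        | none => exact trivial
        | some q =>
          have hq : i' + 1 < q.1.2 := hy q rfl
          have : EnPt n q.1.1 q.1.2 q.2 ≤ EnPt n 0 (i' + 1) hw0 := by
            rw [pt_le_pt]
            rcases Nat.lt_or_ge q.1.2 (i' + 3) with h2 | h2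
            · exact Or.inr (Or.inl ⟨by omega, by omega⟩)
            · exact Or.inr (Or.inr (by omega))
          exact this
      have hs : simRel (Set.range (col n)) (2 * (i' + 1) + 1)
          (EnPt n l (i' + 1) hl) y := hsim
      obtain ⟨z, hxz, hzw⟩ := hs.2 _ hyw
      obtain ⟨l₂, j, h₂, rfl, hc⟩ := le_pt_elim hxz
      rcases hc with ⟨rfl, rfl⟩ | ⟨hj, hl2⟩ | hj
      · -- z = x, same level as w, l₂ = 2^n ≠ 0 : A_{i'+1}
        have hne : l₂ ≠ 0 := by
          have : (1 : ℕ) ≤ 2 ^ n := Nat.one_le_two_pow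
          omega
        exact hA l₂ 0 h₂ hw0 hne hzw
      · -- z at level i' < i'+1 = level of w : B_{i'}... use B_j with j := i'
        have hj' : j = i' := by omega
        subst hj'
        have hB := (IH j (Nat.lt_succ_self j)).2 l₂ h₂ (EnPt n 0 (j + 1) hw0) (by
          intro q hq
          have : q = ⟨(0, j + 1), hw0⟩ := (Option.some.inj hq).symm
          rw [this]; exact Nat.lt_succ_self j)
        exact hB (simRel_le_imp hG (by omega) hzw)
      · -- z at level j < i' : B_j
        have hjlt : j < i' := by omega
        have hB := (IH j (by omega)).2 l₂ h₂ (EnPt n 0 (i' + 1) hw0) (by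
          intro q hq
          have : q = ⟨(0, i' + 1), hw0⟩ := (Option.some.inj hq).symm
          rw [this]; exact Nat.lt_succ_of_lt hjlt)
        exact hB (simRel_le_imp hG (by omega) hzw)

end EnProofAux

/-- The poset `E_n` is `(n+1)`-colourable: there are `n+1` upsets such that
distinct points of `E_n` have distinct `∼_ω`-types over them. -/
theorem En_colourable (n : ℕ) :
    ∃ c : Fin (n + 1) → Set (EnC n),
      (∀ k, IsUpperSet (c k)) ∧
      ∀ p q : EnC n, simOmega (Set.range c) p q → p = q := by
  refine ⟨col n, fun k => col_isUpperSet k, ?_⟩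
  intro p q hsim
  cases p with
  | none =>
    cases q with
    | none => rfl
    | some q' =>
      exfalso
      have hB := (mainAB n q'.1.2).2 q'.1.1 q'.2 (none : EnC n)
        (fun r hr => by simp [EnC] at hr)
      exact hB (simRel_symm _ (hsim (2 * q'.1.2 + 1)))
  | some p' =>
    cases q with
    | none =>
      exfalso
      have hB := (mainAB n p'.1.2).2 p'.1.1 p'.2 (none : EnC n)
        (fun r hr => by simp [EnC] at hr)
      exact hB (hsim (2 * p'.1.2 + 1))
    | some q' =>
      obtain ⟨⟨l, i⟩, hl⟩ := p'
      obtain ⟨⟨l', j⟩, hl'⟩ := q'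
      rcases lt_trichotomy i j with hij | hij | hij
      · exfalso
        have hB := (mainAB n i).2 l hl (EnPt n l' j hl')
          (fun r hr => by
            have : r = ⟨(l', j), hl'⟩ := (Option.some.inj hr).symm
            rw [this]; exact hij)
        exact hB (hsim (2 * i + 1))
      · subst hij
        by_cases hll : l = l'
        · subst hll; rfl
        · exfalso
          exact (mainAB n i).1 l l' hl hl' hll (hsim (2 * i))
      · exfalso
        have hB := (mainAB n j).2 l' hl' (EnPt n l i hl)
          (fun r hr => by
            have : r = ⟨(l, i), hl⟩ := (Option.some.inj hr).symm
            rw [this]; exact hij)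
        exact hB (simRel_symm _ (hsim (2 * j + 1)))
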